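/- arXiv:1102.0272 — 4 statements merged into one kernel-verified Lean document; each statement's English description precedes it below -/
import Mathlib

section
/- The Gaussian function p(x,t) = (1/(σ(t)√(2π))) · exp(−(x−m(t))²/(2σ(t)²)) satisfies the replicator-mutator equation ∂p/∂t = (a + c·x − φ(t))·p + μ·∂²p/∂x², where φ(t) = ∫ (a + c·x)·p(x,t) dx = a + c·m(t), if and only if the parameters satisfy m'(t) = c·σ(t)² and σ'(t) = μ/σ(t) (assuming σ(t) > 0 and σ differentiable). -/
/-!
Both sides of the replicator-mutator equation are the density times a quadratic polynomial in
`x - m t`. Since the density is positive, the equation holds for every `x` iff the coefficients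
agree: the linear ones give `m' = c σ²`, the constant and the quadratic ones both give
`σ σ' = μ`.
-/

open Real

noncomputable def gaussianDensity (m s x : ℝ) : ℝ :=
  1 / (s * √(2 * π)) * exp (-(x - m) ^ 2 / (2 * s ^ 2))

theorem gaussianDensity_pos (m : ℝ) {s : ℝ} (hs : 0 < s) (x : ℝ) :
    0 < gaussianDensity m s x := by
  unfold gaussianDensity
  positivity

theorem hasDerivAt_gaussianDensity (m s x : ℝ) :
    HasDerivAt (gaussianDensity m s) (-(x - m) / s ^ 2 * gaussianDensity m s x) x := by
  have hexponent : HasDerivAt (fun ξ => -(ξ - m) ^ 2 / (2 * s ^ 2)) (-(x - m) / s ^ 2) x := by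
    refine ((((hasDerivAt_id' x).sub_const m).fun_pow 2).fun_neg.div_const
      (2 * s ^ 2)).congr_deriv ?_
    ring
  refine (hexponent.exp.const_mul (1 / (s * √(2 * π)))).congr_deriv ?_
  rw [gaussianDensity]
  ring

theorem deriv_gaussianDensity (m s : ℝ) :
    deriv (gaussianDensity m s) = fun x => -(x - m) / s ^ 2 * gaussianDensity m s x :=
  funext fun x => (hasDerivAt_gaussianDensity m s x).deriv

theorem deriv_deriv_gaussianDensity (m s x : ℝ) :
    deriv (deriv (gaussianDensity m s)) x
      = ((x - m) ^ 2 / s ^ 4 - 1 / s ^ 2) * gaussianDensity m s x := by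
  have hfactor : HasDerivAt (fun ξ => -(ξ - m) / s ^ 2) (-1 / s ^ 2) x := by
    simpa using ((hasDerivAt_id x).sub_const m).neg.div_const (s ^ 2)
  rw [deriv_gaussianDensity, (hfactor.fun_mul (hasDerivAt_gaussianDensity m s x)).deriv]
  ring

theorem hasDerivAt_gaussianDensity_comp {m s : ℝ → ℝ} {m' s' t : ℝ} (x : ℝ)
    (hm : HasDerivAt m m' t) (hs : HasDerivAt s s' t) (hs0 : s t ≠ 0) :
    HasDerivAt (fun τ => gaussianDensity (m τ) (s τ) x)
      ((-s' / s t + (x - m t) * m' / s t ^ 2 + (x - m t) ^ 2 * s' / s t ^ 3)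
        * gaussianDensity (m t) (s t) x) t := by
  have hc : √(2 * π) ≠ 0 := by positivity
  have hnorm : HasDerivAt (fun τ => 1 / (s τ * √(2 * π)))
      (-s' / s t * (1 / (s t * √(2 * π)))) t := by
    refine ((hasDerivAt_const t 1).fun_div (hs.mul_const _) (mul_ne_zero hs0 hc)).congr_deriv ?_
    field_simp
    ring
  have hexponent : HasDerivAt (fun τ => -(x - m τ) ^ 2 / (2 * s τ ^ 2))
      ((x - m t) * m' / s t ^ 2 + (x - m t) ^ 2 * s' / s t ^ 3) t := by
    refine ((((hasDerivAt_const t x).fun_sub hm).fun_pow 2).fun_neg.fun_div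
      ((hs.fun_pow 2).const_mul 2) (mul_ne_zero two_ne_zero (pow_ne_zero 2 hs0))).congr_deriv ?_
    field_simp
    ring
  refine (hnorm.fun_mul hexponent.exp).congr_deriv ?_
  rw [gaussianDensity]
  ring

theorem forall_quadratic_eq_zero_iff {A B C : ℝ} :
    (∀ y : ℝ, A + B * y + C * y ^ 2 = 0) ↔ A = 0 ∧ B = 0 ∧ C = 0 := by
  refine ⟨fun h => ?_, fun ⟨hA, hB, hC⟩ y => by simp [hA, hB, hC]⟩
  have h0 := h 0
  have h1 := h 1
  have h2 := h (-1)
  norm_num at h0 h1 h2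
  refine ⟨h0, ?_, ?_⟩ <;> linarith

theorem gaussianDensity_replicatorMutator_iff (a c μ : ℝ) {m s m' s' : ℝ} (hs : 0 < s) :
    (∀ x, (-s' / s + (x - m) * m' / s ^ 2 + (x - m) ^ 2 * s' / s ^ 3) * gaussianDensity m s x
        = (a + c * x - (a + c * m)) * gaussianDensity m s x
          + μ * (((x - m) ^ 2 / s ^ 4 - 1 / s ^ 2) * gaussianDensity m s x))
      ↔ m' = c * s ^ 2 ∧ s' = μ / s := by
  have hG := fun x => (gaussianDensity_pos m hs x).ne'
  have hs0 := hs.ne'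
  constructor
  · intro h
    have hpoly : ∀ y, (μ / s ^ 2 - s' / s) + (m' / s ^ 2 - c) * y
        + (s' / s ^ 3 - μ / s ^ 4) * y ^ 2 = 0 := fun y =>
      mul_right_cancel₀ (hG (y + m)) (by linear_combination h (y + m))
    obtain ⟨hconst, hlin, -⟩ := forall_quadratic_eq_zero_iff.mp hpoly
    constructor
    · field_simp at hlin; linarith
    · field_simp at hconst ⊢; linarith
  · rintro ⟨rfl, rfl⟩ x
    field_simp
    ring

theorem stmt_0_general (a c μ : ℝ)
    (m σ : ℝ → ℝ) (hm : Differentiable ℝ m) (hσ : Differentiable ℝ σ)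
    (hσpos : ∀ t, 0 < σ t)
    (p : ℝ → ℝ → ℝ)
    (hp : ∀ x t, p x t =
      (1 / (σ t * Real.sqrt (2 * Real.pi))) * Real.exp (-(x - m t)^2 / (2 * (σ t)^2)))
    (φ : ℝ → ℝ)
    (hφ : ∀ t, φ t = a + c * m t) :
    (∀ x t, deriv (fun τ => p x τ) t
        = (a + c * x - φ t) * p x t + μ * deriv (deriv (fun ξ => p ξ t)) x)
      ↔ (∀ t, deriv m t = c * (σ t)^2 ∧ deriv σ t = μ / σ t) := by
  obtain rfl : p = fun x t => gaussianDensity (m t) (σ t) x := funext₂ hp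
  have hdt x t := (hasDerivAt_gaussianDensity_comp x (hm t).hasDerivAt (hσ t).hasDerivAt
    (hσpos t).ne').deriv
  simp only [hdt, deriv_deriv_gaussianDensity, hφ]
  rw [forall_comm]
  exact forall_congr' fun t => gaussianDensity_replicatorMutator_iff a c μ (hσpos t)

/-- The Gaussian ansatz solves the replicator-mutator equation with linear fitness
iff the mean and standard deviation obey m' = c σ², σ' = μ/σ. -/
theorem stmt_0 (a c μ : ℝ) (hμ : 0 < μ)
    (m σ : ℝ → ℝ) (hm : Differentiable ℝ m) (hσ : Differentiable ℝ σ)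
    (hσpos : ∀ t, 0 < σ t)
    (p : ℝ → ℝ → ℝ)
    (hp : ∀ x t, p x t =
      (1 / (σ t * Real.sqrt (2 * Real.pi))) * Real.exp (-(x - m t)^2 / (2 * (σ t)^2)))
    (φ : ℝ → ℝ)
    (hφ : ∀ t, φ t = a + c * m t) :
    (∀ x t, deriv (fun τ => p x τ) t
        = (a + c * x - φ t) * p x t + μ * deriv (deriv (fun ξ => p ξ t)) x)
      ↔ (∀ t, deriv m t = c * (σ t)^2 ∧ deriv σ t = μ / σ t) :=
  stmt_0_general a c μ m σ hm hσ hσpos p hp φ hφ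
end

section
/- The function V(x,t;y) = (1/(2√(πμt))) · exp[(a + c·y)·t + μc²t³/3 − (x − y − cμt²)²/(4μt)] satisfies, for t > 0, the linear PDE ∂V/∂t = (a + c·x)·V + μ·∂²V/∂x². -/
/-!
Write `V = A(t) · exp φ(x, t)` with `A(t) = 1 / (2 √(π μ t))`. Then
`V_t = V (A'/A + φ_t)` and `V_xx = V (φ_xx + φ_x²)`. Since `φ_xx = -1/(2 μ t)` we have
`A'/A = -1/(2t) = μ φ_xx`, so the equation reduces to the Hamilton–Jacobi equation
`φ_t = a + c x + μ φ_x²` for the phase, a direct computation.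
-/

open Real

theorem deriv_deriv_const_mul_exp {g g' : ℝ → ℝ} {g'' : ℝ} (K x : ℝ)
    (hg : ∀ ξ, HasDerivAt g (g' ξ) ξ) (hg' : HasDerivAt g' g'' x) :
    deriv (deriv fun ξ => K * exp (g ξ)) x = K * exp (g x) * (g'' + g' x ^ 2) := by
  have hfirst : deriv (fun ξ => K * exp (g ξ)) = fun ξ => K * exp (g ξ) * g' ξ :=
    funext fun ξ => by simpa [mul_assoc] using (((hg ξ).exp).const_mul K).deriv
  rw [hfirst, ((((hg x).exp).const_mul K).fun_mul hg').deriv]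
  ring

theorem hasDerivAt_one_div_two_sqrt_mul {κ t : ℝ} (hκt : 0 < κ * t) :
    HasDerivAt (fun τ => 1 / (2 * sqrt (κ * τ))) (-(1 / (2 * sqrt (κ * t))) / (2 * t)) t := by
  have ht : t ≠ 0 := by rintro rfl; simp at hκt
  have hS : 0 < sqrt (κ * t) := sqrt_pos.mpr hκt
  have hroot : HasDerivAt (fun τ => 2 * sqrt (κ * τ)) (2 * (κ / (2 * sqrt (κ * t)))) t := by
    simpa using (((hasDerivAt_id t).const_mul κ).sqrt hκt.ne').const_mul 2
  refine ((hasDerivAt_const t (1 : ℝ)).fun_div hroot (by positivity)).congr_deriv ?_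
  field_simp
  rw [sq_sqrt hκt.le]
  ring

section Phase

variable (a c μ y : ℝ)

noncomputable def phase (x t : ℝ) : ℝ :=
  (a + c * y) * t + μ * c ^ 2 * t ^ 3 / 3 - (x - y - c * μ * t ^ 2) ^ 2 / (4 * μ * t)

theorem hasDerivAt_phase_space (x t : ℝ) :
    HasDerivAt (fun ξ => phase a c μ y ξ t) (-(x - y - c * μ * t ^ 2) / (2 * μ * t)) x := by
  refine (((((hasDerivAt_id x).sub_const y).sub_const (c * μ * t ^ 2)).fun_pow 2).div_const
    (4 * μ * t) |>.const_sub ((a + c * y) * t + μ * c ^ 2 * t ^ 3 / 3)).congr_deriv ?_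
  rw [← mul_div_mul_left _ (2 * μ * t) (two_ne_zero (α := ℝ))]
  simp only [id_eq, Nat.cast_ofNat]
  ring

theorem hasDerivAt_phase_time {t : ℝ} (hμ : μ ≠ 0) (ht : t ≠ 0) (x : ℝ) :
    HasDerivAt (phase a c μ y x)
      (a + c * x + μ * (-(x - y - c * μ * t ^ 2) / (2 * μ * t)) ^ 2) t := by
  have hz : HasDerivAt (fun τ => x - y - c * μ * τ ^ 2) (-(c * μ * (2 * t))) t := by
    simpa using ((hasDerivAt_pow 2 t).const_mul (c * μ)).const_sub (x - y)
  have hcubic : HasDerivAt (fun τ => μ * c ^ 2 * τ ^ 3 / 3) (μ * c ^ 2 * (3 * t ^ 2) / 3) t := by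
    simpa using ((hasDerivAt_pow 3 t).const_mul (μ * c ^ 2)).div_const 3
  have hden : HasDerivAt (fun τ => 4 * μ * τ) (4 * μ) t := by
    simpa using (hasDerivAt_id t).const_mul (4 * μ)
  refine ((((hasDerivAt_id t).const_mul (a + c * y)).fun_add hcubic).fun_sub
    ((hz.fun_pow 2).fun_div hden (by simp [hμ, ht]))).congr_deriv ?_
  field_simp
  ring

end Phase

/-- The fundamental solution V(x,t;y) satisfies the linear PDE
∂V/∂t = (a + cx)V + μ V_xx for t > 0. -/
theorem stmt_3 (a c μ y : ℝ) (hμ : 0 < μ)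
    (V : ℝ → ℝ → ℝ)
    (hV : ∀ x t, V x t =
      (1 / (2 * Real.sqrt (Real.pi * μ * t))) *
        Real.exp ((a + c * y) * t + μ * c^2 * t^3 / 3
          - (x - y - c * μ * t^2)^2 / (4 * μ * t))) :
    ∀ x : ℝ, ∀ t : ℝ, 0 < t →
      deriv (fun τ => V x τ) t
        = (a + c * x) * V x t + μ * deriv (deriv (fun ξ => V ξ t)) x := by
  intro x t ht
  obtain rfl : V = fun x t => 1 / (2 * sqrt (π * μ * t)) * exp (phase a c μ y x t) :=
    funext₂ hV
  have hμt : 0 < π * μ * t := by positivity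
  have htime := (hasDerivAt_one_div_two_sqrt_mul hμt).fun_mul
    (hasDerivAt_phase_time a c μ y hμ.ne' ht.ne' x).exp
  have hspace := deriv_deriv_const_mul_exp (1 / (2 * sqrt (π * μ * t))) x
    (hasDerivAt_phase_space a c μ y · t)
    ((((hasDerivAt_id x).sub_const y).sub_const (c * μ * t ^ 2)).fun_neg.div_const (2 * μ * t))
  rw [htime.deriv, hspace]
  field_simp
  ring
end

section
/- If p solves the replicator-mutator equation with mean fitness φ(t), and N solves the logistic equation N'(t) = (φ(t) − N(t))·N(t), then u(x,t) = N(t)·p(x,t) solves the population equation ∂u/∂t = (f(x) − N(t))·u + μ·∂²u/∂x² with N(t) = ∫ u(x,t) dx. -/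
open MeasureTheory

/-! Writing `u = N p`, the product rule gives `∂ₜu = (φ - N) N p + N ∂ₜp`, and the `-φ p` term of the
replicator-mutator equation cancels the `φ N p` term coming from the logistic equation. Since
multiplication by `N t` commutes with `∂ₓ` and with `∫ dx`, the diffusion term and the mass
`∫ u = N ∫ p = N` follow. -/

theorem deriv_deriv_const_mul {𝕜 : Type*} [NontriviallyNormedField 𝕜] (c : 𝕜) (g : 𝕜 → 𝕜) :
    deriv (deriv fun x => c * g x) = fun x => c * deriv (deriv g) x := by
  simp only [deriv_const_mul_field']

theorem stmt_8_general (μ : ℝ) (f : ℝ → ℝ)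
    (p : ℝ → ℝ → ℝ) (φ N : ℝ → ℝ)
    (hprob : ∀ t, 0 ≤ t → ∫ x : ℝ, p x t = 1)
    (hpde : ∀ x t, 0 ≤ t → deriv (fun τ => p x τ) t
        = (f x - φ t) * p x t + μ * deriv (deriv (fun ξ => p ξ t)) x)
    (hpt : ∀ x t, DifferentiableAt ℝ (fun τ => p x τ) t)
    (hN : ∀ t, 0 ≤ t → HasDerivAt N ((φ t - N t) * N t) t)
    (u : ℝ → ℝ → ℝ)
    (hu : ∀ x t, u x t = N t * p x t) :
    ∀ t, 0 ≤ t →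
      (∀ x, deriv (fun τ => u x τ) t
          = (f x - N t) * u x t + μ * deriv (deriv (fun ξ => u ξ t)) x) ∧
      N t = ∫ x : ℝ, u x t := by
  intro t ht
  simp only [hu]
  refine ⟨fun x => ?_, ?_⟩
  · rw [((hN t ht).fun_mul (hpt x t).hasDerivAt).deriv, deriv_deriv_const_mul, hpde x t ht]
    ring
  · rw [integral_const_mul, hprob t ht, mul_one]

/-- If p solves the replicator-mutator equation and N solves the logistic equation
N' = (φ − N)N, then u = N·p solves the population equation. -/
theorem stmt_8 (μ : ℝ) (hμ : 0 < μ) (f : ℝ → ℝ)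
    (p : ℝ → ℝ → ℝ) (φ N : ℝ → ℝ)
    (hprob : ∀ t, 0 ≤ t → ∫ x : ℝ, p x t = 1)
    (hφ : ∀ t, φ t = ∫ x : ℝ, f x * p x t)
    (hpde : ∀ x t, 0 ≤ t → deriv (fun τ => p x τ) t
        = (f x - φ t) * p x t + μ * deriv (deriv (fun ξ => p ξ t)) x)
    (hpt : ∀ x t, DifferentiableAt ℝ (fun τ => p x τ) t)
    (hpx : ∀ x t, DifferentiableAt ℝ (fun ξ => p ξ t) x)
    (hpxx : ∀ x t, DifferentiableAt ℝ (deriv (fun ξ => p ξ t)) x)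
    (hNpos : ∀ t, 0 ≤ t → 0 < N t)
    (hN : ∀ t, 0 ≤ t → HasDerivAt N ((φ t - N t) * N t) t)
    (hintp : ∀ t, 0 ≤ t → Integrable (fun x => p x t))
    (u : ℝ → ℝ → ℝ)
    (hu : ∀ x t, u x t = N t * p x t) :
    ∀ t, 0 ≤ t →
      (∀ x, deriv (fun τ => u x τ) t
          = (f x - N t) * u x t + μ * deriv (deriv (fun ξ => u ξ t)) x) ∧
      N t = ∫ x : ℝ, u x t :=
  stmt_8_general μ f p φ N hprob hpde hpt hN u hu
end

section
/- For every q ∈ ℕ, E₃(q) = Σ_{ℓ=0}^{3} ((q+ℓ)!/(ℓ!·(3−ℓ)!)) · (−1/(q+1))ˡ = −q!/(3(q+1)²). -/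
/-- E₃(q) = −q!/(3(q+1)²). -/
theorem stmt_14 (q : ℕ) :
    (∑ ℓ ∈ Finset.range 4,
        ((Nat.factorial (q + ℓ) : ℝ) / (Nat.factorial ℓ * Nat.factorial (3 - ℓ)))
          * (-1 / ((q : ℝ) + 1))^ℓ)
      = -(Nat.factorial q : ℝ) / (3 * ((q : ℝ) + 1)^2) := by
  have h1 : ((q+1).factorial : ℝ) = (q+1) * q.factorial := by
    push_cast [Nat.factorial_succ]; ring
  have h2 : ((q+2).factorial : ℝ) = (q+2) * (q+1) * q.factorial := by
    push_cast [show q+2 = (q+1)+1 from rfl, Nat.factorial_succ]; ring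
  have h3 : ((q+3).factorial : ℝ) = (q+3) * (q+2) * (q+1) * q.factorial := by
    push_cast [show q+3 = (q+2)+1 from rfl, show q+2 = (q+1)+1 from rfl, Nat.factorial_succ]; ring
  have hq : ((q:ℝ)+1) ≠ 0 := by positivity
  simp only [Finset.sum_range_succ, Finset.sum_range_zero]
  norm_num [Nat.factorial, h1, h2, h3]
  field_simp
  ring
end
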